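/- arXiv:1509.01184 — 7 statements merged into one kernel-verified Lean document; each statement's English description precedes it below -/
import Mathlib

section
/- For any positive integer n and real numbers a_1,...,a_n ≥ 1, one has (a_1·a_2···a_n − 1)^n ≥ (a_1^n − 1)(a_2^n − 1)···(a_n^n − 1), with equality if and only if a_1 = a_2 = ... = a_n. -/
/-!
Write `P = ∏ aᵢ` and split `1 = uᵢ + vᵢ` with `vᵢ = aᵢ⁻ⁿ`, `uᵢ = 1 - aᵢ⁻ⁿ`. By AM-GM the mean of
the `vᵢ` is at least `(∏ vᵢ)^(1/n) = P⁻¹`, so the mean of the `uᵢ` is at most `1 - P⁻¹`, and AM-GM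
again gives `∏ uᵢ ≤ (1 - P⁻¹)ⁿ`. Multiplying by `∏ aᵢⁿ = Pⁿ` turns this into
`∏ (aᵢⁿ - 1) ≤ (P - 1)ⁿ`. Equality forces equality in AM-GM for the `uᵢ`, so all `aᵢ` agree.
-/

open Finset

namespace Real

variable {ι : Type*} (s : Finset ι) {z : ι → ℝ}

lemma prod_rpow_inv_card_pow (hz : ∀ i ∈ s, 0 ≤ z i) :
    (∏ i ∈ s, z i ^ (#s : ℝ)⁻¹) ^ #s = ∏ i ∈ s, z i := by
  rcases s.eq_empty_or_nonempty with rfl | hs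
  · simp
  rw [← prod_pow]
  exact prod_congr rfl fun i hi ↦ rpow_inv_natCast_pow (hz i hi) hs.card_pos.ne'

lemma sum_inv_card_eq_one (hs : s.Nonempty) : ∑ _i ∈ s, (#s : ℝ)⁻¹ = 1 := by
  simp [hs.card_pos.ne']

lemma sum_inv_card_mul (z : ι → ℝ) : ∑ i ∈ s, (#s : ℝ)⁻¹ * z i = (∑ i ∈ s, z i) / #s := by
  rw [← mul_sum, inv_mul_eq_div]

lemma geom_mean_le_sum_div_card (hs : s.Nonempty) (hz : ∀ i ∈ s, 0 ≤ z i) :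
    ∏ i ∈ s, z i ^ (#s : ℝ)⁻¹ ≤ (∑ i ∈ s, z i) / #s := by
  rw [← sum_inv_card_mul]
  exact geom_mean_le_arith_mean_weighted s _ z (fun _ _ ↦ by positivity)
    (sum_inv_card_eq_one s hs) hz

lemma geom_mean_eq_sum_div_card_iff (hs : s.Nonempty) (hz : ∀ i ∈ s, 0 ≤ z i) :
    ∏ i ∈ s, z i ^ (#s : ℝ)⁻¹ = (∑ i ∈ s, z i) / #s ↔ ∀ j ∈ s, ∀ k ∈ s, z j = z k := by
  rw [← sum_inv_card_mul]
  exact geom_mean_eq_arith_mean_weighted_iff_of_pos s _ z (fun _ _ ↦ by positivity)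
    (sum_inv_card_eq_one s hs) hz

lemma sum_div_card_nonneg (hz : ∀ i ∈ s, 0 ≤ z i) : 0 ≤ (∑ i ∈ s, z i) / #s :=
  div_nonneg (sum_nonneg hz) (Nat.cast_nonneg _)

lemma prod_le_sum_div_card_pow (hz : ∀ i ∈ s, 0 ≤ z i) :
    ∏ i ∈ s, z i ≤ ((∑ i ∈ s, z i) / #s) ^ #s := by
  rcases s.eq_empty_or_nonempty with rfl | hs
  · simp
  rw [← prod_rpow_inv_card_pow s hz]
  exact pow_le_pow_left₀ (prod_nonneg fun i hi ↦ rpow_nonneg (hz i hi) _)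
    (geom_mean_le_sum_div_card s hs hz) _

lemma prod_eq_sum_div_card_pow_iff (hz : ∀ i ∈ s, 0 ≤ z i) :
    ∏ i ∈ s, z i = ((∑ i ∈ s, z i) / #s) ^ #s ↔ ∀ j ∈ s, ∀ k ∈ s, z j = z k := by
  rcases s.eq_empty_or_nonempty with rfl | hs
  · simp
  rw [← prod_rpow_inv_card_pow s hz, pow_left_inj₀ (prod_nonneg fun i hi ↦ rpow_nonneg (hz i hi) _)
    (sum_div_card_nonneg s hz) hs.card_pos.ne']
  exact geom_mean_eq_sum_div_card_iff s hs hz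

end Real

section

open Fintype

variable {ι : Type*} [Fintype ι] {a : ι → ℝ}

lemma prod_pow_card_sub_one_eq (ha : ∀ i, a i ≠ 0) :
    ∏ i, (a i ^ card ι - 1) = (∏ i, (1 - (a i ^ card ι)⁻¹)) * (∏ i, a i) ^ card ι := by
  rw [← prod_pow, ← prod_mul_distrib]
  refine prod_congr rfl fun i _ ↦ ?_
  rw [one_sub_mul, inv_mul_cancel₀ (pow_ne_zero _ (ha i))]

lemma inv_prod_le_sum_inv_pow_card_div [Nonempty ι] (ha : ∀ i, 0 < a i) :
    (∏ i, a i)⁻¹ ≤ (∑ i, (a i ^ card ι)⁻¹) / card ι := by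
  have hprod : ∏ i, (a i ^ card ι)⁻¹ = (∏ i, a i)⁻¹ ^ card ι := by
    rw [prod_inv_distrib, prod_pow, inv_pow]
  have := Real.prod_le_sum_div_card_pow univ fun i _ ↦ (inv_pos.2 (pow_pos (ha i) (card ι))).le
  rw [card_univ, hprod] at this
  exact le_of_pow_le_pow_left₀ card_ne_zero
    (Real.sum_div_card_nonneg univ fun i _ ↦ (inv_pos.2 (pow_pos (ha i) _)).le) this

lemma one_sub_inv_pow_nonneg {x : ℝ} (hx : 1 ≤ x) (n : ℕ) : 0 ≤ 1 - (x ^ n)⁻¹ :=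
  sub_nonneg.2 (inv_le_one_of_one_le₀ (one_le_pow₀ hx))

lemma sub_one_pow_eq_one_sub_inv_pow_mul {x : ℝ} (hx : x ≠ 0) (n : ℕ) :
    (x - 1) ^ n = (1 - x⁻¹) ^ n * x ^ n := by
  rw [← mul_pow, one_sub_mul, inv_mul_cancel₀ hx]

lemma sum_one_sub_inv_pow_card_div_pow_le [Nonempty ι] (ha : ∀ i, 1 ≤ a i) :
    ((∑ i, (1 - (a i ^ card ι)⁻¹)) / card ι) ^ card ι ≤ (1 - (∏ i, a i)⁻¹) ^ card ι := by
  have hcard : (card ι : ℝ) ≠ 0 := Nat.cast_ne_zero.2 card_ne_zero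
  have := inv_prod_le_sum_inv_pow_card_div fun i ↦ zero_lt_one.trans_le (ha i)
  gcongr
  · exact Real.sum_div_card_nonneg univ fun i _ ↦ one_sub_inv_pow_nonneg (ha i) _
  · rw [sum_sub_distrib, sum_const, card_univ, nsmul_one, sub_div, div_self hcard]
    linarith

lemma prod_one_sub_inv_pow_card_le (ha : ∀ i, 1 ≤ a i) :
    ∏ i, (1 - (a i ^ card ι)⁻¹) ≤ (1 - (∏ i, a i)⁻¹) ^ card ι := by
  cases isEmpty_or_nonempty ι
  · simp
  calc ∏ i, (1 - (a i ^ card ι)⁻¹)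
      ≤ ((∑ i, (1 - (a i ^ card ι)⁻¹)) / card ι) ^ card ι := by
        simpa using Real.prod_le_sum_div_card_pow univ fun i _ ↦ one_sub_inv_pow_nonneg (ha i) _
    _ ≤ (1 - (∏ i, a i)⁻¹) ^ card ι := sum_one_sub_inv_pow_card_div_pow_le ha

lemma prod_one_sub_inv_pow_card_eq_iff (ha : ∀ i, 1 ≤ a i) :
    ∏ i, (1 - (a i ^ card ι)⁻¹) = (1 - (∏ i, a i)⁻¹) ^ card ι ↔ ∀ i j, a i = a j := by
  cases isEmpty_or_nonempty ι
  · simp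
  have hu i (_ : i ∈ univ) := one_sub_inv_pow_nonneg (ha i) (card ι)
  constructor
  · intro h
    have h_amgm := Real.prod_le_sum_div_card_pow univ hu
    have h_mean := sum_one_sub_inv_pow_card_div_pow_le ha
    rw [card_univ] at h_amgm
    have h_const := (Real.prod_eq_sum_div_card_pow_iff univ hu).1 (by rw [card_univ]; linarith)
    intro i j
    have : a i ^ card ι = a j ^ card ι := by simpa using h_const i (mem_univ i) j (mem_univ j)
    exact (pow_left_inj₀ (zero_le_one.trans (ha i)) (zero_le_one.trans (ha j)) card_ne_zero).1 this
  · intro h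
    obtain ⟨i₀⟩ := ‹Nonempty ι›
    rw [show a = fun _ ↦ a i₀ from funext fun i ↦ h i i₀]
    simp [prod_const]

theorem prod_pow_card_sub_one_le (ha : ∀ i, 1 ≤ a i) :
    ∏ i, (a i ^ card ι - 1) ≤ (∏ i, a i - 1) ^ card ι := by
  have hP : 0 < ∏ i, a i := prod_pos fun i _ ↦ zero_lt_one.trans_le (ha i)
  rw [prod_pow_card_sub_one_eq fun i ↦ (zero_lt_one.trans_le (ha i)).ne',
    sub_one_pow_eq_one_sub_inv_pow_mul hP.ne']
  gcongr
  exact prod_one_sub_inv_pow_card_le ha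

theorem sub_one_pow_card_eq_prod_pow_card_sub_one_iff (ha : ∀ i, 1 ≤ a i) :
    (∏ i, a i - 1) ^ card ι = ∏ i, (a i ^ card ι - 1) ↔ ∀ i j, a i = a j := by
  have hP : 0 < ∏ i, a i := prod_pos fun i _ ↦ zero_lt_one.trans_le (ha i)
  rw [prod_pow_card_sub_one_eq fun i ↦ (zero_lt_one.trans_le (ha i)).ne',
    sub_one_pow_eq_one_sub_inv_pow_mul hP.ne', mul_left_inj' (pow_pos hP _).ne', eq_comm]
  exact prod_one_sub_inv_pow_card_eq_iff ha

end

theorem prod_pow_sub_one_ineq_general (n : ℕ) (a : Fin n → ℝ)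
    (ha : ∀ i, 1 ≤ a i) :
    (∏ i, (a i ^ n - 1)) ≤ ((∏ i, a i) - 1) ^ n ∧
      (((∏ i, a i) - 1) ^ n = ∏ i, (a i ^ n - 1) ↔ ∀ i j, a i = a j) := by
  simpa only [Fintype.card_fin] using
    And.intro (prod_pow_card_sub_one_le ha) (sub_one_pow_card_eq_prod_pow_card_sub_one_iff ha)

/-- For any positive integer `n` and real numbers `a 1, …, a n ≥ 1`,
`(a 1 ⋯ a n − 1)^n ≥ (a 1^n − 1) ⋯ (a n^n − 1)`, with equality iff all `a i` are equal. -/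
theorem prod_pow_sub_one_ineq (n : ℕ) (hn : 0 < n) (a : Fin n → ℝ)
    (ha : ∀ i, 1 ≤ a i) :
    (∏ i, (a i ^ n - 1)) ≤ ((∏ i, a i) - 1) ^ n ∧
      (((∏ i, a i) - 1) ^ n = ∏ i, (a i ^ n - 1) ↔ ∀ i j, a i = a j) :=
  prod_pow_sub_one_ineq_general n a ha
end

section
/- For any positive integer n and real numbers c, x ≥ 1, one has (cx − 1)^n ≥ (c^n x − 1)(x − 1)^{n−1}, with equality if and only if n = 1 or c = 1. -/
private lemma cx_step (m : ℕ) (c x : ℝ) (hc : 1 ≤ c) (hx : 1 ≤ x) :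
    (c ^ (m + 1) * x - 1) * (x - 1) ≤ (c ^ m * x - 1) * (c * x - 1) := by
  have h1 : (1:ℝ) ≤ c ^ m := one_le_pow₀ hc
  have hxp : (0:ℝ) < x := lt_of_lt_of_le one_pos hx
  have key : (c ^ m * x - 1) * (c * x - 1) - (c ^ (m + 1) * x - 1) * (x - 1)
      = x * (c ^ m - 1) * (c - 1) := by rw [pow_succ]; ring
  nlinarith [mul_nonneg (mul_nonneg hxp.le (sub_nonneg.2 h1)) (sub_nonneg.2 hc)]

private lemma cx_le (m : ℕ) (c x : ℝ) (hc : 1 ≤ c) (hx : 1 ≤ x) :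
    (c ^ (m + 1) * x - 1) * (x - 1) ^ m ≤ (c * x - 1) ^ (m + 1) := by
  induction m with
  | zero => simp
  | succ m ih =>
    have hx0 : (0:ℝ) ≤ (x - 1) ^ m := pow_nonneg (by linarith) m
    have hcx : (0:ℝ) ≤ c * x - 1 := by nlinarith
    calc (c ^ (m + 2) * x - 1) * (x - 1) ^ (m + 1)
        = ((c ^ (m + 1 + 1) * x - 1) * (x - 1)) * (x - 1) ^ m := by ring
      _ ≤ ((c ^ (m + 1) * x - 1) * (c * x - 1)) * (x - 1) ^ m :=
          mul_le_mul_of_nonneg_right (cx_step (m + 1) c x hc hx) hx0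
      _ = (c * x - 1) * ((c ^ (m + 1) * x - 1) * (x - 1) ^ m) := by ring
      _ ≤ (c * x - 1) * (c * x - 1) ^ (m + 1) := mul_le_mul_of_nonneg_left ih hcx
      _ = (c * x - 1) ^ (m + 2) := by ring

private lemma cx_lt (m : ℕ) (hm : 1 ≤ m) (c x : ℝ) (hc : 1 < c) (hx : 1 ≤ x) :
    (c ^ (m + 1) * x - 1) * (x - 1) ^ m < (c * x - 1) ^ (m + 1) := by
  induction m with
  | zero => omega
  | succ m ih =>
    have hxp : (0:ℝ) < x := lt_of_lt_of_le one_pos hx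
    rcases Nat.eq_or_lt_of_le hm with h | h
    · -- m + 1 = 1, i.e. m = 0
      have : m = 0 := by omega
      subst this
      have key : (c * x - 1) ^ (0 + 1 + 1) - (c ^ (0 + 1 + 1) * x - 1) * (x - 1) ^ (0 + 1)
          = x * (c - 1) ^ 2 := by ring
      nlinarith [mul_pos hxp (pow_pos (sub_pos.2 hc) 2)]
    · have hm1 : 1 ≤ m := by omega
      have hx0 : (0:ℝ) ≤ (x - 1) ^ m := pow_nonneg (by linarith) m
      have hcx : (0:ℝ) < c * x - 1 := by nlinarith
      calc (c ^ (m + 2) * x - 1) * (x - 1) ^ (m + 1)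
          = ((c ^ (m + 1 + 1) * x - 1) * (x - 1)) * (x - 1) ^ m := by ring
        _ ≤ ((c ^ (m + 1) * x - 1) * (c * x - 1)) * (x - 1) ^ m :=
            mul_le_mul_of_nonneg_right (cx_step (m + 1) c x hc.le hx) hx0
        _ = (c * x - 1) * ((c ^ (m + 1) * x - 1) * (x - 1) ^ m) := by ring
        _ < (c * x - 1) * (c * x - 1) ^ (m + 1) :=
            (mul_lt_mul_iff_right₀ hcx).2 (ih hm1)
        _ = (c * x - 1) ^ (m + 2) := by ring

/-- For any positive integer `n` and real numbers `c, x ≥ 1`,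
`(c*x − 1)^n ≥ (c^n * x − 1) * (x − 1)^(n−1)`, with equality iff `n = 1` or `c = 1`. -/
theorem cx_pow_ineq (n : ℕ) (hn : 0 < n) (c x : ℝ) (hc : 1 ≤ c) (hx : 1 ≤ x) :
    (c ^ n * x - 1) * (x - 1) ^ (n - 1) ≤ (c * x - 1) ^ n ∧
      ((c * x - 1) ^ n = (c ^ n * x - 1) * (x - 1) ^ (n - 1) ↔ n = 1 ∨ c = 1) := by
  obtain ⟨m, rfl⟩ : ∃ m, n = m + 1 := ⟨n - 1, by omega⟩
  simp only [Nat.add_sub_cancel]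
  refine ⟨cx_le m c x hc hx, ?_, ?_⟩
  · intro h
    by_contra hcon
    push_neg at hcon
    obtain ⟨h1, h2⟩ := hcon
    have hm : 1 ≤ m := by omega
    have hc' : 1 < c := lt_of_le_of_ne hc (Ne.symm h2)
    exact absurd h (ne_of_gt (cx_lt m hm c x hc' hx))
  · rintro (h | rfl)
    · have : m = 0 := by omega
      subst this; simp
    · simp only [one_pow, one_mul]
      ring
end

section
/- Over a real closed field F, the symplectic group Sp(2n,F) acts transitively on the Siegel upper half-space X_F = { X + iY : X, Y symmetric n×n over F, Y positive definite }, where Sp(2n,F) acts by fractional linear transformations (A B; C D)·Z = (AZ+B)(CZ+D)^{-1}. -/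
open Matrix Polynomial

/-- A real closed field: an ordered field in which every nonnegative element is a square
and every polynomial of odd degree has a root. -/
def IsRealClosedF (F : Type*) [Field F] [LinearOrder F] [IsStrictOrderedRing F] : Prop :=
  (∀ x : F, 0 ≤ x → ∃ y, y ^ 2 = x) ∧
    ∀ p : Polynomial F, Odd p.natDegree → ∃ x, p.IsRoot x

/-- A symmetric positive definite matrix over an ordered field. -/
def IsPosDefM {F : Type*} [Field F] [LinearOrder F] [IsStrictOrderedRing F] {n : ℕ}
    (Y : Matrix (Fin n) (Fin n) F) : Prop :=
  Yᵀ = Y ∧ ∀ v : Fin n → F, v ≠ 0 → 0 < v ⬝ᵥ Y.mulVec v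

/-- The quadratic extension `K = F[i]`. -/
abbrev Kc (F : Type*) [CommRing F] : Type _ :=
  AdjoinRoot (Polynomial.X ^ 2 + 1 : Polynomial F)

/-- The point `Z = X + iY` of the Siegel upper half-space, as a matrix over `K = F[i]`. -/
noncomputable def siegelPt {F : Type*} [CommRing F] {n : ℕ}
    (X Y : Matrix (Fin n) (Fin n) F) : Matrix (Fin n) (Fin n) (Kc F) :=
  X.map (algebraMap F (Kc F)) +
    (AdjoinRoot.root (Polynomial.X ^ 2 + 1 : Polynomial F)) • Y.map (algebraMap F (Kc F))

/-!
A positive definite `Y` is congruent to the identity: the form `Y` has an orthogonal basis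
(as `2 ≠ 0`), and each basis vector can be divided by a square root of its positive length.
Hence `Y' = A Y Aᵀ` with `A` invertible, and the block upper triangular symplectic matrix
`(A, T A⁻ᵀ; 0, A⁻ᵀ)` with `T = X' - A X Aᵀ` symmetric acts by `Z ↦ A Z Aᵀ + T`, sending
`X + iY` to `X' + iY'`.
-/

namespace Matrix

variable {R : Type*} [CommRing R] {m : Type*} [Fintype m]

theorem mul_mul_transpose_apply (M Y : Matrix m m R) (i j : m) :
    (M * Y * Mᵀ) i j = M i ⬝ᵥ Y *ᵥ M j := by
  rw [mul_apply, dotProduct_mulVec, dotProduct]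
  simp [vecMul, dotProduct, mul_apply, Finset.sum_mul]

variable [DecidableEq m]

theorem eq_inv_mul_inv_transpose_of_mul_mul_transpose_eq_one {A Y : Matrix m m R}
    (h : A * Y * Aᵀ = 1) : Y = A⁻¹ * A⁻¹ᵀ := by
  have hA : IsUnit A.det := isUnit_det_of_right_inverse (by rw [← mul_assoc]; exact h)
  have hAt : IsUnit Aᵀ.det := by rwa [det_transpose]
  calc Y = A⁻¹ * (A * Y * Aᵀ) * Aᵀ⁻¹ := by
        rw [mul_assoc, mul_assoc, mul_nonsing_inv _ hAt, mul_one, ← mul_assoc,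
          nonsing_inv_mul _ hA, one_mul]
    _ = A⁻¹ * A⁻¹ᵀ := by rw [h, mul_one, transpose_nonsing_inv]

theorem fromBlocks_zero₂₁_mem_symplecticGroup {A B D : Matrix m m R}
    (hAD : A * Dᵀ = 1) (hAB : A * Bᵀ = B * Aᵀ) :
    fromBlocks A B 0 D ∈ symplecticGroup m R := by
  have hDA : D * Aᵀ = 1 := by rw [← transpose_transpose D, ← transpose_mul, hAD, transpose_one]
  rw [SymplecticGroup.mem_iff, J, fromBlocks_transpose, fromBlocks_multiply, fromBlocks_multiply]
  simp [hAD, hDA, hAB]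

theorem fromBlocks_mem_symplecticGroup_of_transpose_eq {A S : Matrix m m R}
    (hA : IsUnit A.det) (hS : Sᵀ = S) :
    fromBlocks A (S * A⁻¹ᵀ) 0 A⁻¹ᵀ ∈ symplecticGroup m R := by
  have hAAinv : A * A⁻¹ = 1 := mul_nonsing_inv A hA
  refine fromBlocks_zero₂₁_mem_symplecticGroup (by rwa [transpose_transpose]) ?_
  rw [transpose_mul, transpose_transpose, hS, ← mul_assoc, hAAinv, one_mul, mul_assoc,
    ← transpose_mul, hAAinv, transpose_one, mul_one]

theorem isUnit_det_map_inv_transpose {S : Type*} [CommRing S] (f : R →+* S) {A : Matrix m m R}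
    (hA : IsUnit A.det) : IsUnit (A⁻¹ᵀ.map f).det := by
  rw [← RingHom.mapMatrix_apply, ← RingHom.map_det, det_transpose]
  exact (isUnit_nonsing_inv_det A hA).map f

theorem map_mul_add_mul_inv_transpose_mul_inv {S : Type*} [CommRing S] (f : R →+* S)
    {A : Matrix m m R} (hA : IsUnit A.det) (Z : Matrix m m S) (T : Matrix m m R) :
    (A.map f * Z + (T * A⁻¹ᵀ).map f) * (A⁻¹ᵀ.map f)⁻¹ = A.map f * Z * Aᵀ.map f + T.map f := by
  have hinv : (A⁻¹ᵀ.map f)⁻¹ = Aᵀ.map f := by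
    refine inv_eq_left_inv ?_
    rw [← Matrix.map_mul, ← transpose_mul, nonsing_inv_mul A hA, transpose_one,
      Matrix.map_one _ f.map_zero f.map_one]
  rw [hinv, add_mul, ← Matrix.map_mul, mul_assoc T, ← transpose_mul, mul_nonsing_inv A hA,
    transpose_one, mul_one]

end Matrix

section PosDef

variable {F : Type*} [Field F] [LinearOrder F] [IsStrictOrderedRing F] {n : ℕ}

theorem IsPosDefM.exists_mul_mul_transpose_eq_one (hsq : ∀ x : F, 0 ≤ x → ∃ y, y ^ 2 = x)
    {Y : Matrix (Fin n) (Fin n) F} (hY : IsPosDefM Y) :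
    ∃ A : Matrix (Fin n) (Fin n) F, A * Y * Aᵀ = 1 := by
  have : Invertible (2 : F) := invertibleOfNonzero two_ne_zero
  obtain ⟨v₀, hv₀⟩ := LinearMap.BilinForm.exists_orthogonal_basis
    (LinearMap.BilinForm.isSymm_iff.mp (isSymm_toBilin'_iff_isSymm.mpr hY.1))
  let e := finCongr (Module.finrank_fin_fun F (n := n))
  let v := v₀.reindex e
  have hv : Pairwise fun i j => v i ⬝ᵥ Y *ᵥ v j = 0 := fun i j hij => by
    simpa [v, toBilin'_apply'] using hv₀ (e.symm.injective.ne hij)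
  choose d hd using fun i => hsq _ (hY.2 (v i) (v.ne_zero i)).le
  have hd₀ : ∀ i, d i ≠ 0 := fun i h => by
    simpa [h, ← hd i] using hY.2 (v i) (v.ne_zero i)
  refine ⟨of fun i => (d i)⁻¹ • v i, ext fun i j => ?_⟩
  rw [mul_mul_transpose_apply]
  change ((d i)⁻¹ • v i) ⬝ᵥ Y *ᵥ ((d j)⁻¹ • v j) = _
  rw [mulVec_smul, dotProduct_smul, smul_dotProduct, smul_eq_mul, smul_eq_mul]
  rcases eq_or_ne i j with rfl | hij
  · rw [← hd i, one_apply_eq]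
    field_simp [hd₀ i]
  · rw [hv hij, one_apply_ne hij, mul_zero, mul_zero]

theorem IsPosDefM.exists_isUnit_det_mul_mul_transpose_eq
    (hsq : ∀ x : F, 0 ≤ x → ∃ y, y ^ 2 = x) {Y Y' : Matrix (Fin n) (Fin n) F}
    (hY : IsPosDefM Y) (hY' : IsPosDefM Y') :
    ∃ A : Matrix (Fin n) (Fin n) F, IsUnit A.det ∧ A * Y * Aᵀ = Y' := by
  obtain ⟨A₁, h₁⟩ := hY.exists_mul_mul_transpose_eq_one hsq
  obtain ⟨A₂, h₂⟩ := hY'.exists_mul_mul_transpose_eq_one hsq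
  have hA₁ : IsUnit A₁.det := isUnit_det_of_right_inverse (by rw [← mul_assoc]; exact h₁)
  have hA₂ : IsUnit A₂.det := isUnit_det_of_right_inverse (by rw [← mul_assoc]; exact h₂)
  refine ⟨A₂⁻¹ * A₁, ?_, ?_⟩
  · rw [det_mul]
    exact (isUnit_nonsing_inv_det A₂ hA₂).mul hA₁
  · rw [eq_inv_mul_inv_transpose_of_mul_mul_transpose_eq_one h₂, transpose_mul]
    calc A₂⁻¹ * A₁ * Y * (A₁ᵀ * A₂⁻¹ᵀ) = A₂⁻¹ * (A₁ * Y * A₁ᵀ) * A₂⁻¹ᵀ := by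
          simp only [mul_assoc]
      _ = A₂⁻¹ * A₂⁻¹ᵀ := by rw [h₁, mul_one]

end PosDef

theorem siegelPt_congr_add {F : Type*} [CommRing F] {n : ℕ}
    (A X Y T : Matrix (Fin n) (Fin n) F) :
    A.map (algebraMap F (Kc F)) * siegelPt X Y * Aᵀ.map (algebraMap F (Kc F)) +
        T.map (algebraMap F (Kc F)) = siegelPt (A * X * Aᵀ + T) (A * Y * Aᵀ) := by
  rw [siegelPt, siegelPt, Matrix.map_add _ (map_add _)]
  simp only [Matrix.map_mul, mul_add, add_mul, Matrix.mul_smul, Matrix.smul_mul]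
  abel

/-- Over a real closed field `F`, the symplectic group `Sp(2n,F)` acts
transitively on the Siegel upper half-space
`X_F = { X + iY : X, Y ∈ Sym(n,F), Y positive definite }`, acting by fractional linear
transformations `(A B; C D)·Z = (AZ+B)(CZ+D)⁻¹`. -/
theorem symplectic_transitive_on_siegel_space
    (F : Type*) [Field F] [LinearOrder F] [IsStrictOrderedRing F] (hF : IsRealClosedF F) (n : ℕ)
    (X Y X' Y' : Matrix (Fin n) (Fin n) F)
    (hX : Xᵀ = X) (hY : IsPosDefM Y) (hX' : X'ᵀ = X') (hY' : IsPosDefM Y') :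
    ∃ g ∈ Matrix.symplecticGroup (Fin n) F,
      IsUnit (((Matrix.toBlocks₂₁ g).map (algebraMap F (Kc F)) * siegelPt X Y +
          (Matrix.toBlocks₂₂ g).map (algebraMap F (Kc F))).det) ∧
      ((Matrix.toBlocks₁₁ g).map (algebraMap F (Kc F)) * siegelPt X Y +
          (Matrix.toBlocks₁₂ g).map (algebraMap F (Kc F))) *
        ((Matrix.toBlocks₂₁ g).map (algebraMap F (Kc F)) * siegelPt X Y +
          (Matrix.toBlocks₂₂ g).map (algebraMap F (Kc F)))⁻¹ = siegelPt X' Y' := by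
  obtain ⟨A, hA, rfl⟩ := hY.exists_isUnit_det_mul_mul_transpose_eq hF.1 hY'
  set T := X' - A * X * Aᵀ
  have hT : Tᵀ = T := by
    rw [transpose_sub, hX', transpose_mul, transpose_mul, transpose_transpose, hX, ← mul_assoc]
  refine ⟨fromBlocks A (T * A⁻¹ᵀ) 0 A⁻¹ᵀ,
    fromBlocks_mem_symplecticGroup_of_transpose_eq hA hT, ?_⟩
  simp only [toBlocks_fromBlocks₁₁, toBlocks_fromBlocks₁₂, toBlocks_fromBlocks₂₁,
    toBlocks_fromBlocks₂₂, Matrix.map_zero _ (map_zero _), Matrix.zero_mul, zero_add]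
  refine ⟨isUnit_det_map_inv_transpose _ hA, ?_⟩
  rw [map_mul_add_mul_inv_transpose_mul_inv _ hA, siegelPt_congr_add, add_sub_cancel]
end

section
/- Let l_1, l_2, l_3, l_4 be n-dimensional subspaces of a 2n-dimensional vector space, each spanned by the columns of a matrix of the form (X_i; Id_n), and assume l_1 ⋔ l_2, l_3 ⋔ l_4. Then the crossratio endomorphism R(l_1,l_2,l_3,l_4) = p_{l_1}^{∥l_2} ∘ p_{l_4}^{∥l_3}|_{l_1}, expressed in the basis given by the columns of (X_1; Id_n), equals (X_1 − X_2)^{-1}(X_4 − X_2)(X_4 − X_3)^{-1}(X_1 − X_3). -/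
open Matrix

/-- The linear embedding `F^n → F^(2n)` whose image is the column span of the block
matrix `(M; Id)`. -/
def colMap {L : Type*} [CommRing L] {n : ℕ} (M : Matrix (Fin n) (Fin n) L) :
    (Fin n → L) →ₗ[L] ((Fin n ⊕ Fin n) → L) where
  toFun v := Sum.elim (M.mulVec v) v
  map_add' u v := by
    funext x
    cases x <;> simp [Matrix.mulVec_add]
  map_smul' c v := by
    funext x
    cases x <;> simp [Matrix.mulVec_smul]

lemma sub_det_isUnit {L : Type*} [Field L] {n : ℕ} {A B : Matrix (Fin n) (Fin n) L}
    (h : Disjoint (LinearMap.range (colMap A)) (LinearMap.range (colMap B))) :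
    IsUnit (A - B).det := by
  rw [isUnit_iff_ne_zero]
  intro hd
  obtain ⟨v, hv, hv0⟩ := (Matrix.exists_mulVec_eq_zero_iff).2 hd
  have hAB : A.mulVec v = B.mulVec v := by
    have h' : A.mulVec v - B.mulVec v = 0 := by rw [← Matrix.sub_mulVec]; exact hv0
    exact sub_eq_zero.mp h'
  have hmem : colMap A v ∈ LinearMap.range (colMap A) ⊓ LinearMap.range (colMap B) := by
    refine ⟨⟨v, rfl⟩, ⟨v, ?_⟩⟩
    show Sum.elim (B.mulVec v) v = Sum.elim (A.mulVec v) v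
    rw [hAB]
  have hz : colMap A v = 0 := by
    have := h.eq_bot ▸ hmem
    simpa using this
  apply hv
  funext i
  have := congrFun hz (Sum.inr i)
  simpa [colMap] using this

lemma proj_colMap {L : Type*} [Field L] {n : ℕ} {A B M : Matrix (Fin n) (Fin n) L}
    {p : ((Fin n ⊕ Fin n) → L) →ₗ[L] ((Fin n ⊕ Fin n) → L)}
    (hp : LinearMap.IsProj (LinearMap.range (colMap A)) p)
    (hk : LinearMap.ker p = LinearMap.range (colMap B))
    (hAB : IsUnit (A - B).det) (v : Fin n → L) :
    p (colMap M v) = colMap A (((A - B)⁻¹ * (M - B)).mulVec v) := by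
  set C : Matrix (Fin n) (Fin n) L := (A - B)⁻¹ * (M - B) with hC
  have hmat : A * C + B * (1 - C) = M := by
    have h1 : (A - B) * C = M - B := by
      rw [hC, ← Matrix.mul_assoc, Matrix.mul_nonsing_inv _ hAB, Matrix.one_mul]
    calc A * C + B * (1 - C) = (A - B) * C + B := by noncomm_ring
    _ = M := by rw [h1]; abel
  have hdecomp : colMap M v = colMap A (C.mulVec v) + colMap B ((1 - C).mulVec v) := by
    funext x
    cases x with
    | inl i =>
      show M.mulVec v i = A.mulVec (C.mulVec v) i + B.mulVec ((1 - C).mulVec v) i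
      have hvec : M.mulVec v = A.mulVec (C.mulVec v) + B.mulVec ((1 - C).mulVec v) := by
        rw [Matrix.mulVec_mulVec, Matrix.mulVec_mulVec, ← Matrix.add_mulVec, hmat]
      exact congrFun hvec i
    | inr i =>
      show v i = C.mulVec v i + (1 - C).mulVec v i
      have hvec : C.mulVec v + (1 - C).mulVec v = v := by
        rw [← Matrix.add_mulVec]; simp
      exact (congrFun hvec i).symm
  rw [hdecomp, map_add]
  have h1 : p (colMap A (C.mulVec v)) = colMap A (C.mulVec v) :=
    hp.map_id _ ⟨C.mulVec v, rfl⟩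
  have h2 : p (colMap B ((1 - C).mulVec v)) = 0 := by
    have : colMap B ((1 - C).mulVec v) ∈ LinearMap.ker p := by
      rw [hk]; exact ⟨_, rfl⟩
    exact this
  rw [h1, h2, add_zero]

/-- Let `l i` be the column span of `(X i; Id)` in `L^(2n)`, with
`l 1 ⋔ l 2` and `l 3 ⋔ l 4`.  If `p` is the projection onto `l 1` with kernel `l 2`, and
`q` is the projection onto `l 4` with kernel `l 3`, then the crossratio
`R(l1,l2,l3,l4) = p ∘ q |_{l1}`, expressed in the basis given by the columns of
`(X 1; Id)`, equals `(X1 − X2)⁻¹ (X4 − X2) (X4 − X3)⁻¹ (X1 − X3)`. -/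
theorem crossratio_matrix_formula (L : Type*) [Field L] (n : ℕ)
    (X1 X2 X3 X4 : Matrix (Fin n) (Fin n) L)
    (h12 : IsCompl (LinearMap.range (colMap X1)) (LinearMap.range (colMap X2)))
    (h34 : IsCompl (LinearMap.range (colMap X3)) (LinearMap.range (colMap X4)))
    (p q : ((Fin n ⊕ Fin n) → L) →ₗ[L] ((Fin n ⊕ Fin n) → L))
    (hp : LinearMap.IsProj (LinearMap.range (colMap X1)) p)
    (hpker : LinearMap.ker p = LinearMap.range (colMap X2))
    (hq : LinearMap.IsProj (LinearMap.range (colMap X4)) q)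
    (hqker : LinearMap.ker q = LinearMap.range (colMap X3)) :
    ∀ v : Fin n → L,
      p (q (colMap X1 v)) =
        colMap X1 (((X1 - X2)⁻¹ * (X4 - X2) * (X4 - X3)⁻¹ * (X1 - X3)).mulVec v) := by
  intro v
  have hu12 : IsUnit (X1 - X2).det := sub_det_isUnit h12.disjoint
  have hu43 : IsUnit (X4 - X3).det := sub_det_isUnit h34.disjoint.symm
  rw [proj_colMap hq hqker hu43 v, proj_colMap hp hpker hu12, Matrix.mulVec_mulVec]
  congr 2
  noncomm_ring
end

section
/- With l_1, l_2, l_3, l_4 pairwise transverse n-dimensional subspaces of a 2n-dimensional space, the crossratio satisfies: (1) R(l_1,l_2,l_4,l_3) = Id − R(l_1,l_2,l_3,l_4); (2) R(l_4,l_1,l_2,l_3) is conjugate to (Id − R(l_1,l_2,l_3,l_4)^{-1})^{-1}; (3) R(l_1,l_4,l_2,l_3) is conjugate to (Id − R(l_1,l_2,l_3,l_4))^{-1}. -/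
open Matrix

/-- The matrix crossratio `R(l1,l2,l3,l4)` of four `n`-dimensional subspaces given in an
affine chart by the matrices `a, b, c, d` (each subspace being the column span of
`(X; Id)`): `R = (a − b)⁻¹ (d − b) (d − c)⁻¹ (a − c)`. -/
noncomputable def crm {L : Type*} [CommRing L] {n : ℕ} (a b c d : Matrix (Fin n) (Fin n) L) :
    Matrix (Fin n) (Fin n) L :=
  (a - b)⁻¹ * (d - b) * (d - c)⁻¹ * (a - c)

section Aux

variable {L : Type*} [Field L] {n : ℕ}

lemma crm_aux_inv_neg {A : Matrix (Fin n) (Fin n) L} (h : IsUnit A.det) :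
    (-A)⁻¹ = -A⁻¹ :=
  Matrix.inv_eq_right_inv (by rw [neg_mul_neg, Matrix.mul_nonsing_inv _ h])

lemma crm_aux_unit_comm {a b : Matrix (Fin n) (Fin n) L} (h : IsUnit (a - b).det) :
    IsUnit (b - a).det := by
  rw [show b - a = -(a - b) from (neg_sub a b).symm, Matrix.det_neg]
  exact (isUnit_one.neg.pow _).mul h

lemma crm_ring_core1 {R : Type*} [Ring R] (a b c d e f : R)
    (he1 : (d - c) * e = 1) (he2 : e * (d - c) = 1) (hf2 : f * (a - b) = 1) :
    f * (c - b) * -e * (a - d) = 1 - f * (d - b) * e * (a - c) := by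
  have main : (d - b) * e * (a - c) - (c - b) * e * (a - d) = a - b := by
    calc (d - b) * e * (a - c) - (c - b) * e * (a - d)
        = ((d - c) * e) * (a - c) + (c - b) * (e * (d - c)) := by noncomm_ring
      _ = a - b := by rw [he1, he2, one_mul, mul_one]; abel
  have main2 : (c - b) * -e * (a - d) = (a - b) - (d - b) * e * (a - c) := by
    rw [← main]; noncomm_ring
  calc f * (c - b) * -e * (a - d)
      = f * ((c - b) * -e * (a - d)) := by noncomm_ring
    _ = f * ((a - b) - (d - b) * e * (a - c)) := by rw [main2]
    _ = f * (a - b) - f * ((d - b) * e * (a - c)) := by noncomm_ring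
    _ = 1 - f * (d - b) * e * (a - c) := by rw [hf2]; noncomm_ring

lemma crm_ring_core2 {R : Type*} [Ring R] (P A D C W p e c : R)
    (hp1 : P * p = 1) (hp2 : p * P = 1) (he1 : D * e = 1) (he2 : e * D = 1)
    (hc1 : C * c = 1) (hc2 : c * C = 1)
    (hW : W = A - D) (hC : C = P - W) :
    p * A * e * C * (c * W) = c * W * (p * C * e * A) := by
  have hK : A * (e * W) = W * (e * A) := by
    rw [hW]
    calc A * (e * (A - D)) = A * (e * A) - A * (e * D) := by noncomm_ring
      _ = A * (e * A) - (D * e) * A := by rw [he2, he1, mul_one, one_mul]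
      _ = (A - D) * (e * A) := by noncomm_ring
  have h : C * (p * (A * (e * W))) = W * (p * (C * (e * A))) := by
    calc C * (p * (A * (e * W)))
        = (P * p) * (A * (e * W)) - W * (p * (A * (e * W))) := by rw [hC]; noncomm_ring
      _ = A * (e * W) - W * (p * (A * (e * W))) := by rw [hp1, one_mul]
      _ = W * (e * A) - W * (p * (W * (e * A))) := by rw [hK]
      _ = W * ((p * P) * (e * A)) - W * (p * (W * (e * A))) := by rw [hp2, one_mul]
      _ = W * (p * (C * (e * A))) := by rw [hC]; noncomm_ring
  calc p * A * e * C * (c * W) = p * (A * (e * ((C * c) * W))) := by noncomm_ring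
    _ = p * (A * (e * W)) := by rw [hc1, one_mul]
    _ = (c * C) * (p * (A * (e * W))) := by rw [hc2, one_mul]
    _ = c * (W * (p * (C * (e * A)))) := by rw [mul_assoc, h]
    _ = c * W * (p * C * e * A) := by noncomm_ring

lemma crm_one_sub (a b c d : Matrix (Fin n) (Fin n) L)
    (hab : IsUnit (a - b).det) (hdc : IsUnit (d - c).det) :
    crm a b d c = 1 - crm a b c d := by
  unfold crm
  rw [show c - d = -(d - c) from (neg_sub d c).symm, crm_aux_inv_neg hdc]
  exact crm_ring_core1 a b c d _ _ (Matrix.mul_nonsing_inv _ hdc)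
    (Matrix.nonsing_inv_mul _ hdc) (Matrix.nonsing_inv_mul _ hab)

lemma crm_inv (a b c d : Matrix (Fin n) (Fin n) L)
    (hab : IsUnit (a - b).det) (hdc : IsUnit (d - c).det) :
    (crm a b c d)⁻¹ = crm a c b d := by
  unfold crm
  simp only [Matrix.mul_inv_rev]
  rw [Matrix.nonsing_inv_nonsing_inv _ hdc, Matrix.nonsing_inv_nonsing_inv _ hab]
  noncomm_ring

end Aux

/-- For pairwise transverse `n`-dimensional subspaces `l1, l2, l3, l4`
(given in a chart by matrices `X1, X2, X3, X4`, transversality being invertibility of the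
differences), the crossratio satisfies:
(1) `R(l1,l2,l4,l3) = Id − R(l1,l2,l3,l4)`;
(2) `R(l4,l1,l2,l3)` is conjugate to `(Id − R(l1,l2,l3,l4)⁻¹)⁻¹`;
(3) `R(l1,l4,l2,l3)` is conjugate to `(Id − R(l1,l2,l3,l4))⁻¹`. -/
theorem crossratio_permutation_identities (L : Type*) [Field L] (n : ℕ)
    (X1 X2 X3 X4 : Matrix (Fin n) (Fin n) L)
    (h12 : IsUnit (X1 - X2).det) (h13 : IsUnit (X1 - X3).det)
    (h14 : IsUnit (X1 - X4).det) (h23 : IsUnit (X2 - X3).det)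
    (h24 : IsUnit (X2 - X4).det) (h34 : IsUnit (X3 - X4).det) :
    crm X1 X2 X4 X3 = 1 - crm X1 X2 X3 X4 ∧
      (∃ g : Matrix (Fin n) (Fin n) L, IsUnit g.det ∧
        crm X4 X1 X2 X3 = g * (1 - (crm X1 X2 X3 X4)⁻¹)⁻¹ * g⁻¹) ∧
      (∃ g : Matrix (Fin n) (Fin n) L, IsUnit g.det ∧
        crm X1 X4 X2 X3 = g * (1 - crm X1 X2 X3 X4)⁻¹ * g⁻¹) := by
  have h43 : IsUnit (X4 - X3).det := crm_aux_unit_comm h34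
  have h42 : IsUnit (X4 - X2).det := crm_aux_unit_comm h24
  refine ⟨crm_one_sub X1 X2 X3 X4 h12 h43, ?_, ?_⟩
  · -- part (2)
    refine ⟨(X2 - X4)⁻¹ * (X1 - X2), ?_, ?_⟩
    · rw [Matrix.det_mul]
      exact (Matrix.isUnit_nonsing_inv_det _ h24).mul h12
    · have hgdet : IsUnit ((X2 - X4)⁻¹ * (X1 - X2)).det := by
        rw [Matrix.det_mul]
        exact (Matrix.isUnit_nonsing_inv_det _ h24).mul h12
      rw [crm_inv X1 X2 X3 X4 h12 h43, ← crm_one_sub X1 X3 X2 X4 h13 h42,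
        crm_inv X1 X3 X4 X2 h13 h24]
      have hM1 : crm X4 X1 X2 X3
          = (X1 - X4)⁻¹ * (X1 - X3) * (X2 - X3)⁻¹ * (X2 - X4) := by
        unfold crm
        rw [show X4 - X1 = -(X1 - X4) from (neg_sub X1 X4).symm, crm_aux_inv_neg h14,
          show X3 - X1 = -(X1 - X3) from (neg_sub X1 X3).symm,
          show X3 - X2 = -(X2 - X3) from (neg_sub X2 X3).symm, crm_aux_inv_neg h23,
          show X4 - X2 = -(X2 - X4) from (neg_sub X2 X4).symm]
        noncomm_ring
      have hT : crm X1 X4 X3 X2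
          = (X1 - X4)⁻¹ * (X2 - X4) * (X2 - X3)⁻¹ * (X1 - X3) := rfl
      have heq : crm X4 X1 X2 X3 * ((X2 - X4)⁻¹ * (X1 - X2))
          = (X2 - X4)⁻¹ * (X1 - X2) * crm X1 X4 X3 X2 := by
        rw [hM1, hT]
        exact crm_ring_core2 (X1 - X4) (X1 - X3) (X2 - X3) (X2 - X4) (X1 - X2)
          (X1 - X4)⁻¹ (X2 - X3)⁻¹ (X2 - X4)⁻¹
          (Matrix.mul_nonsing_inv _ h14) (Matrix.nonsing_inv_mul _ h14)
          (Matrix.mul_nonsing_inv _ h23) (Matrix.nonsing_inv_mul _ h23)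
          (Matrix.mul_nonsing_inv _ h24) (Matrix.nonsing_inv_mul _ h24)
          (by abel) (by abel)
      rw [← heq, Matrix.mul_assoc, Matrix.mul_nonsing_inv _ hgdet, Matrix.mul_one]
  · -- part (3)
    refine ⟨1, by simp, ?_⟩
    rw [inv_one, Matrix.mul_one, Matrix.one_mul,
      ← crm_one_sub X1 X2 X3 X4 h12 h43, crm_inv X1 X2 X4 X3 h12 h34]
end

section
/- Let F be real closed and D = diag(d_1,...,d_n) with all d_i > 0. Then the F-tubes Y_{0,l_∞} and Y_{−Id, D} in the Siegel upper half-space intersect in exactly one point, namely iY where Y is the unique positive square root of D. -/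
open Matrix Polynomial

/-- A real closed field. -/
def IsRealClosedFld (F : Type*) [Field F] [LinearOrder F] [IsStrictOrderedRing F] : Prop :=
  (∀ x : F, 0 ≤ x → ∃ y, y ^ 2 = x) ∧
    ∀ p : Polynomial F, Odd p.natDegree → ∃ x, p.IsRoot x

/-- The complex conjugate `σ(Z) = X − iY`. -/
noncomputable def siegelConj {F : Type*} [CommRing F] {n : ℕ}
    (X Y : Matrix (Fin n) (Fin n) F) : Matrix (Fin n) (Fin n) (Kc F) :=
  X.map (algebraMap F (Kc F)) -
    (AdjoinRoot.root (Polynomial.X ^ 2 + 1 : Polynomial F)) • Y.map (algebraMap F (Kc F))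

/-- Membership of the Siegel point `Z = X + iY` in both tubes `Y_{0,l_∞}` (given by
`Z⁻¹ σ(Z) = −Id`) and `Y_{−Id,D}` (given by `R(−Id, Z, σ(Z), D) = −Id`). -/
noncomputable def InBothTubes {F : Type*} [Field F] [LinearOrder F] [IsStrictOrderedRing F] {n : ℕ}
    (D X Y : Matrix (Fin n) (Fin n) F) : Prop :=
  Xᵀ = X ∧ IsPosDefM Y ∧
    (siegelPt X Y)⁻¹ * siegelConj X Y = -1 ∧
    crm (-1) (siegelPt X Y) (siegelConj X Y) (D.map (algebraMap F (Kc F))) = -1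

/-!
Over `K = F[i]`, a matrix `A + iB` with `A` positive definite and `B` symmetric is invertible:
a kernel vector `x + iy` would give `Ax = By`, `Ay = -Bx`, hence `x ⬝ Ax + y ⬝ Ay = 0`.
So `Z = X + iY` is invertible, and `Z⁻¹ σ(Z) = -1` says `σ(Z) = -Z`, i.e. `X = 0`.
With `W = iY`, the crossratio equation `R(-1, W, -W, D) = -1` unwinds (everything but `D`
being a polynomial in `W`) to `(W - 1)(D - W) = (1 + W)(D + W)`, i.e. `W² = -D`, i.e. `Y² = D`.
Finally a positive definite square root is unique, since `Y (Y - Y') + (Y - Y') Y' = 0` forces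
`Y = Y'` by a trace argument, and over a real closed field `diag (√dᵢ)` is one.
-/

section QuadraticExtension

variable {F : Type*} [Field F] [LinearOrder F] [IsStrictOrderedRing F]

theorem irreducible_X_sq_add_one : Irreducible (X ^ 2 + 1 : F[X]) := by
  refine irreducible_of_degree_le_three_of_not_isRoot ?_ fun x hx => ?_
  · rw [show (X ^ 2 + 1 : F[X]).natDegree = 2 by compute_degree!]; decide
  · simp only [IsRoot, eval_add, eval_pow, eval_X, eval_one] at hx
    nlinarith [sq_nonneg x]

instance : Fact (Irreducible (X ^ 2 + 1 : F[X])) := ⟨irreducible_X_sq_add_one⟩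

end QuadraticExtension

noncomputable abbrev Kc.i (F : Type*) [CommRing F] : Kc F := AdjoinRoot.root (X ^ 2 + 1)

namespace Kc

variable {F : Type*} [Field F] [LinearOrder F] [IsStrictOrderedRing F]

local notation "φ" => algebraMap F (Kc F)

theorem i_mul_i : i F * i F = -1 := by
  have h := AdjoinRoot.eval₂_root (X ^ 2 + 1 : F[X])
  rw [eval₂_add, eval₂_X_pow, eval₂_one] at h
  linear_combination h

theorem eq_zero_of_algebraMap_add_i_mul_algebraMap_eq_zero {a b : F}
    (h : φ a + i F * φ b = 0) : a = 0 ∧ b = 0 := by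
  have hb : b = 0 := by
    by_contra hb
    have hi : i F = φ (-a / b) := by
      rw [map_div₀, map_neg, eq_div_iff ((_root_.map_ne_zero _).2 hb)]
      linear_combination h
    have : φ ((-a / b) ^ 2 + 1) = 0 := by
      rw [map_add, map_pow, ← hi, sq (i F), i_mul_i, map_one, neg_add_cancel]
    have := (map_eq_zero _).1 this
    nlinarith [sq_nonneg (-a / b)]
  subst hb
  simpa using h

theorem exists_eq_algebraMap_add_i_mul_algebraMap (z : Kc F) :
    ∃ a b : F, z = φ a + i F * φ b := by
  obtain ⟨p, rfl⟩ := AdjoinRoot.mk_surjective z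
  induction p using Polynomial.induction_on with
  | C a => exact ⟨a, 0, by simp [AdjoinRoot.mk_C]⟩
  | add p q hp hq =>
    obtain ⟨a, b, hp⟩ := hp
    obtain ⟨a', b', hq⟩ := hq
    exact ⟨a + a', b + b', by rw [map_add, hp, hq, map_add, map_add]; ring⟩
  | monomial k c h =>
    obtain ⟨a, b, h⟩ := h
    refine ⟨-b, a, ?_⟩
    rw [pow_succ X k, ← mul_assoc, map_mul, h, AdjoinRoot.mk_X, map_neg]
    linear_combination φ b * i_mul_i (F := F)

end Kc

namespace Matrix

theorem transpose_mul_mul_apply_self {R : Type*} [CommSemiring R] {m : Type*} [Fintype m]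
    (A M : Matrix m m R) (j : m) : (Mᵀ * A * M) j j = Mᵀ j ⬝ᵥ A *ᵥ Mᵀ j := by
  simp only [mul_apply, transpose_apply, dotProduct, mulVec, Finset.sum_mul, Finset.mul_sum]
  rw [Finset.sum_comm]
  exact Finset.sum_congr rfl fun _ _ => Finset.sum_congr rfl fun _ _ => by ring

theorem dotProduct_mulVec_comm_of_transpose_eq {R : Type*} [CommSemiring R] {m : Type*}
    [Fintype m] {B : Matrix m m R} (hB : Bᵀ = B) (x y : m → R) :
    x ⬝ᵥ B *ᵥ y = y ⬝ᵥ B *ᵥ x := by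
  rw [dotProduct_mulVec, ← mulVec_transpose, hB, dotProduct_comm]

theorem dotProduct_mulVec_nonneg_of_pos {R : Type*} [Semiring R] [PartialOrder R] {m : Type*}
    [Fintype m] {A : Matrix m m R} (hA : ∀ v, v ≠ 0 → 0 < v ⬝ᵥ A *ᵥ v) (v : m → R) :
    0 ≤ v ⬝ᵥ A *ᵥ v := by
  rcases eq_or_ne v 0 with rfl | hv
  · simp
  · exact (hA v hv).le

section QuadraticForms

variable {R : Type*} [CommRing R] [LinearOrder R] [IsStrictOrderedRing R] {m : Type*} [Fintype m]

theorem dotProduct_diagonal_mulVec_pos [DecidableEq m] {d : m → R} (hd : ∀ i, 0 < d i)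
    {v : m → R} (hv : v ≠ 0) :
    0 < v ⬝ᵥ diagonal d *ᵥ v := by
  obtain ⟨i, hi⟩ := Function.ne_iff.1 hv
  refine Finset.sum_pos' (fun j _ => ?_) ⟨i, Finset.mem_univ i, ?_⟩ <;> rw [mulVec_diagonal]
  · nlinarith [mul_self_nonneg (v j), hd j]
  · nlinarith [mul_self_pos.2 hi, hd i]

theorem eq_zero_of_mul_add_mul_eq_zero {A B M : Matrix m m R}
    (hA : ∀ v, v ≠ 0 → 0 < v ⬝ᵥ A *ᵥ v) (hB : ∀ v, 0 ≤ v ⬝ᵥ B *ᵥ v)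
    (h : A * M + M * B = 0) :
    M = 0 := by
  -- both traces are sums of quadratic forms, in the columns of `M` and in its rows
  have htrace : trace (Mᵀ * A * M) + trace (Mᵀᵀ * B * Mᵀ) = 0 := by
    rw [transpose_transpose, trace_mul_comm (M * B), Matrix.mul_assoc Mᵀ A M, ← trace_add,
      ← Matrix.mul_add, h, Matrix.mul_zero, trace_zero]
  simp only [trace, diag, transpose_mul_mul_apply_self, ← Finset.sum_add_distrib] at htrace
  have hcol (j : m) : Mᵀ j = 0 := by
    by_contra hj
    have := (Finset.sum_eq_zero_iff_of_nonneg fun k _ =>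
      add_nonneg (dotProduct_mulVec_nonneg_of_pos hA _) (hB _)).1 htrace j (Finset.mem_univ j)
    linarith [hA _ hj, hB (Mᵀᵀ j)]
  ext i j
  exact congrFun (hcol j) i

end QuadraticForms

end Matrix

section Invertibility

variable {F : Type*} [Field F] [LinearOrder F] [IsStrictOrderedRing F]
  {m : Type*} [Fintype m] [DecidableEq m]

local notation "φ" => algebraMap F (Kc F)

theorem isUnit_map_add_i_smul_map {A B : Matrix m m F}
    (hA : ∀ v, v ≠ 0 → 0 < v ⬝ᵥ A *ᵥ v) (hB : Bᵀ = B) :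
    IsUnit (A.map φ + Kc.i F • B.map φ) := by
  rw [isUnit_iff_isUnit_det, isUnit_iff_ne_zero]
  intro hdet
  obtain ⟨v, hv, hker⟩ := exists_mulVec_eq_zero_iff.2 hdet
  choose x y hxy using fun j => Kc.exists_eq_algebraMap_add_i_mul_algebraMap (v j)
  have hv' : v = φ ∘ x + Kc.i F • (φ ∘ y) := funext hxy
  have hparts (j : m) : (A *ᵥ x - B *ᵥ y) j = 0 ∧ (A *ᵥ y + B *ᵥ x) j = 0 := by
    have hj := congrFun hker j
    simp only [hv', add_mulVec, mulVec_add, smul_mulVec, mulVec_smul, Pi.add_apply,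
      Pi.smul_apply, smul_eq_mul, Pi.zero_apply, ← RingHom.map_mulVec] at hj
    refine Kc.eq_zero_of_algebraMap_add_i_mul_algebraMap_eq_zero ?_
    rw [Pi.sub_apply, Pi.add_apply, map_sub, map_add]
    linear_combination hj - φ ((B *ᵥ y) j) * Kc.i_mul_i (F := F)
  have hx : A *ᵥ x = B *ᵥ y := funext fun j => sub_eq_zero.1 (hparts j).1
  have hy : A *ᵥ y = -(B *ᵥ x) := funext fun j => eq_neg_of_add_eq_zero_left (hparts j).2
  have hsum : x ⬝ᵥ A *ᵥ x + y ⬝ᵥ A *ᵥ y = 0 := by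
    rw [hx, hy, dotProduct_neg, dotProduct_mulVec_comm_of_transpose_eq hB, add_neg_cancel]
  have hx0 : x = 0 := by
    by_contra h
    linarith [hA x h, dotProduct_mulVec_nonneg_of_pos hA y]
  have hy0 : y = 0 := by
    by_contra h
    linarith [hA y h, dotProduct_mulVec_nonneg_of_pos hA x]
  exact hv (by rw [hv', hx0, hy0]; simp)

end Invertibility

theorem crm_neg_one_neg_eq_neg_one_iff {L : Type*} [Field L] (h2 : (2 : L) ≠ 0) {n : ℕ}
    {W E : Matrix (Fin n) (Fin n) L} (hP : IsUnit (1 + W)) (hQ : IsUnit (1 - W))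
    (hS : IsUnit (E + W)) :
    crm (-1) W (-W) E = -1 ↔ W * W = -E := by
  let _ := (show IsUnit (-1 - W) by simpa only [neg_add'] using hP.neg).invertible
  let _ := (show IsUnit (W - 1) by simpa only [neg_sub] using hQ.neg).invertible
  let _ := hS.invertible
  have hcomm : Commute (1 + W) (W - 1)⁻¹ := by
    rw [← invOf_eq_nonsing_inv]
    exact Commute.invOf_right (by unfold Commute SemiconjBy; noncomm_ring)
  have hdiff : (W - 1) * (E - W) - (1 + W) * (E + W) = -((2 : L) • (W * W + E)) := by
    rw [two_smul]; noncomm_ring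
  rw [crm, sub_neg_eq_add, neg_sub_neg, Matrix.mul_assoc, Matrix.mul_assoc,
    inv_mul_eq_iff_eq_mul_of_invertible, show (-1 - W) * -1 = 1 + W by noncomm_ring,
    ← Matrix.mul_assoc, eq_comm, ← mul_inv_eq_iff_eq_mul_of_invertible, hcomm.eq,
    inv_mul_eq_iff_eq_mul_of_invertible, ← Matrix.mul_assoc, eq_comm,
    mul_inv_eq_iff_eq_mul_of_invertible, ← sub_eq_zero, hdiff, neg_eq_zero, smul_eq_zero,
    or_iff_right h2, add_eq_zero_iff_eq_neg]

section SiegelSpace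

variable {F : Type*} [Field F] [LinearOrder F] [IsStrictOrderedRing F] {n : ℕ}

local notation "φ" => algebraMap F (Kc F)

theorem isUnit_siegelPt {X Y : Matrix (Fin n) (Fin n) F} (hX : Xᵀ = X) (hY : IsPosDefM Y) :
    IsUnit (siegelPt X Y) := by
  have hi : IsUnit (Kc.i F) := Ne.isUnit fun h => by simpa [h] using Kc.i_mul_i (F := F)
  have h := isUnit_map_add_i_smul_map hY.2 (B := -X) (by rw [transpose_neg, hX])
  have hZ : siegelPt X Y = Kc.i F • (Y.map φ + Kc.i F • (-X).map φ) := by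
    rw [siegelPt, smul_add, smul_smul, Kc.i_mul_i, neg_smul, one_smul,
      Matrix.map_neg _ (map_neg φ), neg_neg, add_comm]
  rw [hZ, isUnit_iff_isUnit_det, det_smul]
  exact (hi.pow _).mul ((isUnit_iff_isUnit_det _).1 h)

theorem siegelConj_eq_neg_siegelPt_iff {X Y : Matrix (Fin n) (Fin n) F} :
    siegelConj X Y = -siegelPt X Y ↔ X = 0 := by
  rw [eq_neg_iff_add_eq_zero, siegelConj, siegelPt, sub_add_add_cancel]
  refine ⟨fun h => ?_, fun h => by simp [h]⟩
  ext i j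
  simpa [← map_add] using congrFun (congrFun h i) j

theorem crm_siegelPt_zero_eq_neg_one_iff {D Y : Matrix (Fin n) (Fin n) F}
    (hD : ∀ v, v ≠ 0 → 0 < v ⬝ᵥ D *ᵥ v) (hY : IsPosDefM Y) :
    crm (-1) (siegelPt 0 Y) (siegelConj 0 Y) (D.map φ) = -1 ↔ Y * Y = D := by
  have hone (v : Fin n → F) (hv : v ≠ 0) :
      0 < v ⬝ᵥ (1 : Matrix (Fin n) (Fin n) F) *ᵥ v := by
    simpa using dotProduct_diagonal_mulVec_pos (fun _ => one_pos) hv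
  have hP : IsUnit (1 + Kc.i F • Y.map φ) := by
    simpa using isUnit_map_add_i_smul_map hone hY.1
  have hQ : IsUnit (1 - Kc.i F • Y.map φ) := by
    have h := isUnit_map_add_i_smul_map hone (B := -Y) (by rw [transpose_neg, hY.1])
    rwa [Matrix.map_one _ (map_zero φ) (map_one φ), Matrix.map_neg _ (map_neg φ), smul_neg,
      ← sub_eq_add_neg] at h
  have h2 : (2 : Kc F) ≠ 0 := by
    rw [← map_ofNat φ 2]
    exact (map_ne_zero φ).2 two_ne_zero
  have hPt : siegelPt 0 Y = Kc.i F • Y.map φ := by simp [siegelPt]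
  have hConj : siegelConj 0 Y = -(Kc.i F • Y.map φ) := by simp [siegelConj]
  rw [hPt, hConj, crm_neg_one_neg_eq_neg_one_iff h2 hP hQ (isUnit_map_add_i_smul_map hD hY.1),
    Matrix.smul_mul, Matrix.mul_smul, smul_smul, Kc.i_mul_i, neg_one_smul, neg_inj,
    ← Matrix.map_mul, (Matrix.map_injective (algebraMap F (Kc F)).injective).eq_iff]

theorem inBothTubes_iff {D X Y : Matrix (Fin n) (Fin n) F}
    (hD : ∀ v, v ≠ 0 → 0 < v ⬝ᵥ D *ᵥ v) :
    InBothTubes D X Y ↔ X = 0 ∧ IsPosDefM Y ∧ Y * Y = D := by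
  constructor
  · rintro ⟨hX, hY, hinv, hcrm⟩
    have hX0 : X = 0 := by
      let _ := (isUnit_siegelPt hX hY).invertible
      rwa [inv_mul_eq_iff_eq_mul_of_invertible, mul_neg_one,
        siegelConj_eq_neg_siegelPt_iff] at hinv
    subst hX0
    exact ⟨rfl, hY, (crm_siegelPt_zero_eq_neg_one_iff hD hY).1 hcrm⟩
  · rintro ⟨rfl, hY, hYD⟩
    refine ⟨transpose_zero, hY, ?_, (crm_siegelPt_zero_eq_neg_one_iff hD hY).2 hYD⟩
    rw [siegelConj_eq_neg_siegelPt_iff.2 rfl, Matrix.mul_neg,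
      nonsing_inv_mul _ ((isUnit_iff_isUnit_det _).1 (isUnit_siegelPt transpose_zero hY))]

theorem IsPosDefM.eq_of_mul_self_eq {Y Y' : Matrix (Fin n) (Fin n) F} (hY : IsPosDefM Y)
    (hY' : IsPosDefM Y') (h : Y * Y = Y' * Y') : Y = Y' :=
  sub_eq_zero.1 <| eq_zero_of_mul_add_mul_eq_zero hY.2 (dotProduct_mulVec_nonneg_of_pos hY'.2)
    (by rw [Matrix.mul_sub, Matrix.sub_mul, h]; abel)

theorem IsRealClosedFld.exists_pos_mul_self_eq (hF : IsRealClosedFld F) {a : F} (ha : 0 < a) :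
    ∃ s, 0 < s ∧ s * s = a := by
  obtain ⟨y, hy⟩ := hF.1 a ha.le
  refine ⟨|y|, abs_pos.2 fun hy0 => ?_, by rw [abs_mul_abs_self, ← sq, hy]⟩
  rw [hy0, sq, zero_mul] at hy
  exact ha.ne hy

end SiegelSpace

/-- Over a real closed field, for `D = diag(d₁,…,dₙ)` with all `dᵢ > 0`,
the `F`-tubes `Y_{0,l_∞}` and `Y_{−Id,D}` meet in exactly one point of the Siegel upper
half-space, namely `i√D` where `√D` is the positive square root of `D`. -/
theorem tubes_intersect_in_one_point (F : Type*) [Field F] [LinearOrder F] [IsStrictOrderedRing F]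
    (hF : IsRealClosedFld F) (n : ℕ) (d : Fin n → F) (hd : ∀ i, 0 < d i) :
    (∃! p : Matrix (Fin n) (Fin n) F × Matrix (Fin n) (Fin n) F,
        InBothTubes (Matrix.diagonal d) p.1 p.2) ∧
      ∀ X Y : Matrix (Fin n) (Fin n) F, InBothTubes (Matrix.diagonal d) X Y →
        X = 0 ∧ Y * Y = Matrix.diagonal d := by
  have hD (v : Fin n → F) (hv : v ≠ 0) := dotProduct_diagonal_mulVec_pos hd hv
  choose s hs hss using fun i => hF.exists_pos_mul_self_eq (hd i)
  have hS : IsPosDefM (diagonal s) :=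
    ⟨diagonal_transpose s, fun v hv => dotProduct_diagonal_mulVec_pos hs hv⟩
  have hSS : diagonal s * diagonal s = diagonal d := by
    rw [diagonal_mul_diagonal]
    exact congrArg diagonal (funext hss)
  refine ⟨⟨(0, diagonal s), (inBothTubes_iff hD).2 ⟨rfl, hS, hSS⟩, ?_⟩, fun X Y h => ?_⟩
  · rintro ⟨X, Y⟩ h
    obtain ⟨rfl, hY, hYY⟩ := (inBothTubes_iff hD).1 h
    exact Prod.ext rfl (hY.eq_of_mul_self_eq hS (hYY.trans hSS.symm))
  · obtain ⟨hX, -, hYY⟩ := (inBothTubes_iff hD).1 h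
    exact ⟨hX, hYY⟩
end

section
/- Let a, b ∈ Sym(n,F) over an ordered field, parametrizing Lagrangians in the chart of l_∞, and let x_1,...,x_k be symmetric matrices with 0 ≪ x_1 ≪ x_2 ≪ ... ≪ x_k (each difference positive definite). With the norm ‖·‖ from an order-compatible valuation, Σ_{i=1}^{k−1} sqrt(Σ_j (ln‖λ_j^{(i)}‖)²) ≤ √n · sqrt(Σ_j (ln‖μ_j‖)²), where λ_j^{(i)} are the eigenvalues of x_i^{-1/2} x_{i+1} x_i^{-1/2} and μ_j are the eigenvalues of x_1^{-1/2} x_k x_1^{-1/2}; equivalently, using det R(0, x_1, x_k, l_∞) = Π_{i} det R(0, x_i, x_{i+1}, l_∞), the sum of the 'distances' between consecutive projections is at most √n times the distance between the endpoints. -/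
/-! Conjugating by `(r i)⁻¹` turns `x i ≪ x (i + 1)` into `1 ≪ (r i)⁻¹ * x (i + 1) * (r i)⁻¹`,
so every `lam i j` exceeds `1` and, `N` being monotone, every `log (N (lam i j))` is nonnegative.
For nonnegative terms the Euclidean norm is at most the sum, and the sum of the logarithms of the
eigenvalues is `log N (det x (i + 1)) - log N (det x i)`. These differences telescope to
`log N (det x k) - log N (det x 0) = ∑ j, log N (mu j)`, which Cauchy–Schwarz bounds by `√n` times
the distance between the endpoints. -/

open Matrix Polynomial

namespace Real

theorem sqrt_sum_sq_le_sum {ι : Type*} {s : Finset ι} {f : ι → ℝ}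
    (hf : ∀ i ∈ s, 0 ≤ f i) :
    √(∑ i ∈ s, f i ^ 2) ≤ ∑ i ∈ s, f i :=
  (sqrt_le_left (Finset.sum_nonneg hf)).2 (Finset.sum_sq_le_sq_sum_of_nonneg hf)

theorem sum_le_sqrt_card_mul_sqrt_sum_sq {ι : Type*} (s : Finset ι) (f : ι → ℝ) :
    ∑ i ∈ s, f i ≤ √s.card * √(∑ i ∈ s, f i ^ 2) := by
  rw [← sqrt_mul (Nat.cast_nonneg _)]
  exact (le_abs_self _).trans (abs_le_sqrt (sq_sum_le_card_mul_sum_sq ..))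

end Real

theorem Matrix.det_eq_prod_of_charpoly_eq_prod {F ι : Type*} [Field F] [Fintype ι]
    [DecidableEq ι] {A : Matrix ι ι F} {f : ι → F} (hf : A.charpoly = ∏ j, (X - C (f j))) :
    A.det = ∏ j, f j := by
  have hroots : A.charpoly.roots = Finset.univ.val.map f := by
    rw [hf, Finset.prod_eq_multiset_prod, ← roots_multiset_prod_X_sub_C (Finset.univ.val.map f),
      Multiset.map_map]
    rfl
  rw [det_eq_prod_roots_charpoly_of_splits (hf ▸ Splits.prod fun j _ => Splits.X_sub_C _), hroots]
  rfl

theorem Matrix.det_scalar_sub_eq_zero_of_charpoly_eq_prod {F ι : Type*} [Field F] [Fintype ι]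
    [DecidableEq ι] {A : Matrix ι ι F} {f : ι → F} (hf : A.charpoly = ∏ j, (X - C (f j)))
    (j : ι) : (scalar ι (f j) - A).det = 0 := by
  rw [← eval_charpoly, hf, eval_prod]
  exact Finset.prod_eq_zero (Finset.mem_univ j) (by simp)

theorem Matrix.det_inv_mul_mul_inv_mul_det {R ι : Type*} [CommRing R] [Fintype ι]
    [DecidableEq ι] {r : Matrix ι ι R} (hr : IsUnit r.det) (y : Matrix ι ι R) :
    (r⁻¹ * y * r⁻¹).det * (r * r).det = y.det := by
  simp only [det_mul]
  linear_combination (r⁻¹.det * r.det + 1) * y.det * det_nonsing_inv_mul_det _ hr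

theorem Matrix.inv_mul_mul_inv_sub_one {R ι : Type*} [CommRing R] [Fintype ι]
    [DecidableEq ι] {r : Matrix ι ι R} (hr : IsUnit r.det) (y : Matrix ι ι R) :
    r⁻¹ * y * r⁻¹ - 1 = r⁻¹ * (y - r * r) * r⁻¹ := by
  rw [Matrix.mul_sub, Matrix.sub_mul, ← Matrix.mul_assoc, nonsing_inv_mul _ hr, Matrix.one_mul,
    mul_nonsing_inv _ hr]

namespace IsPosDefM

variable {F : Type*} [Field F] [LinearOrder F] [IsStrictOrderedRing F] {n : ℕ}
  {M : Matrix (Fin n) (Fin n) F}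

theorem det_ne_zero (h : IsPosDefM M) : M.det ≠ 0 := by
  intro h0
  obtain ⟨v, hv, hMv⟩ := exists_mulVec_eq_zero_iff.2 h0
  simpa [hMv] using h.2 v hv

theorem transpose_mul_mul (h : IsPosDefM M) {B : Matrix (Fin n) (Fin n) F} (hB : B.det ≠ 0) :
    IsPosDefM (Bᵀ * M * B) := by
  refine ⟨by rw [transpose_mul, transpose_mul, transpose_transpose, h.1, Matrix.mul_assoc], ?_⟩
  intro v hv
  have hBv : B *ᵥ v ≠ 0 := fun h0 => hB (exists_mulVec_eq_zero_iff.1 ⟨v, hv, h0⟩)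
  rw [← mulVec_mulVec, ← mulVec_mulVec, dotProduct_mulVec, vecMul_transpose]
  exact h.2 _ hBv

theorem add_scalar (h : IsPosDefM M) {c : F} (hc : 0 ≤ c) : IsPosDefM (M + scalar (Fin n) c) := by
  refine ⟨by rw [transpose_add, h.1, scalar_apply, diagonal_transpose], fun v hv => ?_⟩
  rw [add_mulVec, dotProduct_add, scalar_apply, ← smul_one_eq_diagonal, smul_mulVec, one_mulVec,
    dotProduct_smul, smul_eq_mul]
  have : 0 ≤ v ⬝ᵥ v := Finset.sum_nonneg fun i _ => mul_self_nonneg (v i)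
  nlinarith [h.2 v hv]

theorem lt_of_charpoly_eq_prod {A : Matrix (Fin n) (Fin n) F} {c : F}
    (hA : IsPosDefM (A - scalar (Fin n) c))
    {f : Fin n → F} (hf : A.charpoly = ∏ j, (X - C (f j))) (j : Fin n) : c < f j := by
  by_contra! hle
  have hpd : IsPosDefM (A - scalar (Fin n) (f j)) := by
    convert hA.add_scalar (sub_nonneg.2 hle) using 1
    rw [map_sub]; abel
  have hdet := det_scalar_sub_eq_zero_of_charpoly_eq_prod hf j
  rw [← neg_sub, det_neg] at hdet
  exact hpd.det_ne_zero ((mul_eq_zero.1 hdet).resolve_left (by simp))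

end IsPosDefM

theorem MonoidHom.map_ne_zero_of_ne_zero {G M : Type*} [GroupWithZero G] [MonoidWithZero M]
    [Nontrivial M] (N : G →* M) {a : G} (ha : a ≠ 0) : N a ≠ 0 :=
  ((IsUnit.mk0 a ha).map N).ne_zero

theorem sum_log_eigenvalues_eq {F : Type*} [Field F] (N : F →* ℝ) {n : ℕ}
    {r y : Matrix (Fin n) (Fin n) F} (hr : r.det ≠ 0) (hy : y.det ≠ 0) {f : Fin n → F}
    (hf : (r⁻¹ * y * r⁻¹).charpoly = ∏ j, (X - C (f j))) :
    ∑ j, Real.log (N (f j)) = Real.log (N y.det) - Real.log (N (r * r).det) := by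
  have hdet := det_inv_mul_mul_inv_mul_det (isUnit_iff_ne_zero.2 hr) y
  rw [det_eq_prod_of_charpoly_eq_prod hf] at hdet
  have hprod : ∏ j, f j ≠ 0 := left_ne_zero_of_mul (hdet ▸ hy)
  have hrr : (r * r).det ≠ 0 := by rw [det_mul]; exact mul_ne_zero hr hr
  have hf0 (j : Fin n) : f j ≠ 0 := Finset.prod_ne_zero_iff.1 hprod j (Finset.mem_univ j)
  rw [← hdet, map_mul,
    Real.log_mul (N.map_ne_zero_of_ne_zero hprod) (N.map_ne_zero_of_ne_zero hrr), map_prod,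
    Real.log_prod fun j _ => N.map_ne_zero_of_ne_zero (hf0 j), add_sub_cancel_right]

theorem sum_consecutive_distances_le_general (F : Type*) [Field F] [LinearOrder F] [IsStrictOrderedRing F]
    (N : F → ℝ) (hN1 : N 1 = 1)
    (hNmul : ∀ x y, N (x * y) = N x * N y)
    (hNmono : ∀ x y : F, 0 < x → x ≤ y → N x ≤ N y)
    (n k : ℕ)
    (x : ℕ → Matrix (Fin n) (Fin n) F)
    (hx : ∀ i ≤ k, IsPosDefM (x i))
    (hdiff : ∀ i < k, IsPosDefM (x (i + 1) - x i))
    (r : ℕ → Matrix (Fin n) (Fin n) F)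
    (hr : ∀ i ≤ k, IsPosDefM (r i) ∧ r i * r i = x i)
    (lam : ℕ → Fin n → F)
    (hlam : ∀ i < k, ((r i)⁻¹ * x (i + 1) * (r i)⁻¹).charpoly =
      ∏ j, (Polynomial.X - Polynomial.C (lam i j)))
    (mu : Fin n → F)
    (hmu : ((r 0)⁻¹ * x k * (r 0)⁻¹).charpoly =
      ∏ j, (Polynomial.X - Polynomial.C (mu j))) :
    ∑ i ∈ Finset.range k, Real.sqrt (∑ j, (Real.log (N (lam i j))) ^ 2) ≤
      Real.sqrt n * Real.sqrt (∑ j, (Real.log (N (mu j))) ^ 2) := by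
  let NM : F →* ℝ := ⟨⟨N, hN1⟩, hNmul⟩
  let c : ℕ → ℝ := fun i => Real.log (N (x i).det)
  have hsum_log : ∀ i ≤ k, ∀ m ≤ k, ∀ f : Fin n → F,
      ((r i)⁻¹ * x m * (r i)⁻¹).charpoly = ∏ j, (X - C (f j)) →
      ∑ j, Real.log (N (f j)) = c m - c i := fun i hi m hm f hf => by
    have h := sum_log_eigenvalues_eq NM (hr i hi).1.det_ne_zero (hx m hm).det_ne_zero hf
    rwa [(hr i hi).2] at h
  have hstep : ∀ i < k, √(∑ j, Real.log (N (lam i j)) ^ 2) ≤ c (i + 1) - c i := by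
    intro i hi
    obtain ⟨hri, hrsq⟩ := hr i hi.le
    have hunit : IsUnit (r i).det := isUnit_iff_ne_zero.2 hri.det_ne_zero
    have hgap : IsPosDefM ((r i)⁻¹ * x (i + 1) * (r i)⁻¹ - scalar (Fin n) 1) := by
      have hconj := (hdiff i hi).transpose_mul_mul (isUnit_nonsing_inv_det _ hunit).ne_zero
      rwa [transpose_nonsing_inv, hri.1, ← hrsq, ← inv_mul_mul_inv_sub_one hunit,
        ← map_one (scalar (Fin n))] at hconj
    have hlog_nonneg : ∀ j, 0 ≤ Real.log (N (lam i j)) := fun j =>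
      Real.log_nonneg (hN1 ▸ hNmono 1 _ one_pos (hgap.lt_of_charpoly_eq_prod (hlam i hi) j).le)
    rw [← hsum_log i hi.le (i + 1) hi _ (hlam i hi)]
    exact Real.sqrt_sum_sq_le_sum fun j _ => hlog_nonneg j
  calc ∑ i ∈ Finset.range k, √(∑ j, Real.log (N (lam i j)) ^ 2)
      ≤ ∑ i ∈ Finset.range k, (c (i + 1) - c i) :=
        Finset.sum_le_sum fun i hi => hstep i (Finset.mem_range.1 hi)
    _ = ∑ j, Real.log (N (mu j)) := by
        rw [Finset.sum_range_sub, hsum_log 0 k.zero_le k le_rfl mu hmu]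
    _ ≤ √n * √(∑ j, Real.log (N (mu j)) ^ 2) := by
        simpa using Real.sum_le_sqrt_card_mul_sqrt_sum_sq Finset.univ fun j => Real.log (N (mu j))

/-- Let `F` be an ordered field with multiplicative order-compatible
norm `N` coming from a valuation.  Let `x 0 ≪ x 1 ≪ ⋯ ≪ x k` be positive definite
symmetric matrices (consecutive differences positive definite), `r i` the positive
definite square root of `x i`, `λ i j` the eigenvalues of `(r i)⁻¹ x (i+1) (r i)⁻¹` and
`μ j` the eigenvalues of `(r 0)⁻¹ x k (r 0)⁻¹` (encoded by splittings of the
characteristic polynomials).  Then the sum of the distances between consecutive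
projections is at most `√n` times the distance between the endpoints:
`Σ_{i<k} sqrt(Σⱼ (ln‖λ i j‖)²) ≤ √n · sqrt(Σⱼ (ln‖μ j‖)²)`. -/
theorem sum_consecutive_distances_le (F : Type*) [Field F] [LinearOrder F] [IsStrictOrderedRing F]
    (N : F → ℝ) (hN0 : ∀ x, 0 ≤ N x) (hN1 : N 1 = 1)
    (hNmul : ∀ x y, N (x * y) = N x * N y)
    (hNmono : ∀ x y : F, 0 < x → x ≤ y → N x ≤ N y)
    (n k : ℕ)
    (x : ℕ → Matrix (Fin n) (Fin n) F)
    (hx : ∀ i ≤ k, IsPosDefM (x i))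
    (hdiff : ∀ i < k, IsPosDefM (x (i + 1) - x i))
    (r : ℕ → Matrix (Fin n) (Fin n) F)
    (hr : ∀ i ≤ k, IsPosDefM (r i) ∧ r i * r i = x i)
    (lam : ℕ → Fin n → F)
    (hlam : ∀ i < k, ((r i)⁻¹ * x (i + 1) * (r i)⁻¹).charpoly =
      ∏ j, (Polynomial.X - Polynomial.C (lam i j)))
    (mu : Fin n → F)
    (hmu : ((r 0)⁻¹ * x k * (r 0)⁻¹).charpoly =
      ∏ j, (Polynomial.X - Polynomial.C (mu j))) :
    ∑ i ∈ Finset.range k, Real.sqrt (∑ j, (Real.log (N (lam i j))) ^ 2) ≤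
      Real.sqrt n * Real.sqrt (∑ j, (Real.log (N (mu j))) ^ 2) :=
  sum_consecutive_distances_le_general F N hN1 hNmul hNmono n k x hx hdiff r hr lam hlam mu hmu
end
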